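/- arXiv:1801.05998 — 3 statements merged into one kernel-verified Lean document; each statement's English description precedes it below -/
import Mathlib

section
/- Let A_{ij}(z), i,j ∈ {1,…,N}, be power series with nonnegative coefficients such that A_{ij}(1) = P_{ij} where P is a stochastic matrix with P_{ii} < 1 for all i. Define M(z) = z·I - A(z)^entrywise, i.e., M(z)_{ii} = z - A_{ii}(z), M(z)_{ij} = -A_{ij}(z) for i ≠ j. Then for every z with |z| = 1 and z ≠ 1, the matrix M(z) is strictly diagonally dominant by rows, hence det M(z) ≠ 0. -/
/-!
On the unit circle `‖A i j z‖ ≤ P i j` termwise from the series, with strict inequality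
wherever `P i j > 0`; since each row of `P` sums to `1`, this gives `∑ j, ‖A i j z‖ < 1 = ‖z‖`.
Then `‖z - A i i z‖ ≥ 1 - ‖A i i z‖ > ∑ j ≠ i, ‖A i j z‖`, and the Levy–Desplanques theorem
gives `det M(z) ≠ 0`.
-/

open Finset

theorem norm_tsum_ofReal_mul_pow_le {p : ℕ → ℝ} {s : ℝ} (hp : ∀ k, 0 ≤ p k) (hs : HasSum p s)
    {z : ℂ} (hz : ‖z‖ ≤ 1) : ‖∑' k, (p k : ℂ) * z ^ k‖ ≤ s :=
  tsum_of_norm_bounded hs fun k => by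
    rw [norm_mul, norm_pow, Complex.norm_real, Real.norm_of_nonneg (hp k)]
    exact mul_le_of_le_one_right (hp k) (pow_le_one₀ (norm_nonneg z) hz)

theorem Finset.sum_lt_sum_of_lt_of_pos {ι : Type*} {s : Finset ι} {f g : ι → ℝ}
    (hle : ∀ j ∈ s, f j ≤ g j) (hlt : ∀ j ∈ s, 0 < g j → f j < g j) (hpos : 0 < ∑ j ∈ s, g j) :
    ∑ j ∈ s, f j < ∑ j ∈ s, g j := by
  obtain ⟨j, hj, hgj⟩ : ∃ j ∈ s, (0 : ι → ℝ) j < g j :=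
    exists_lt_of_sum_lt (by simpa using hpos)
  exact sum_lt_sum hle ⟨j, hj, hlt j hj hgj⟩

theorem sum_erase_norm_lt_norm_sub {ι E : Type*} [Fintype ι] [DecidableEq ι]
    [SeminormedAddCommGroup E] {a : ι → E} {z : E}
    (ha : ∑ j, ‖a j‖ < ‖z‖) (i : ι) : ∑ j ∈ univ.erase i, ‖a j‖ < ‖z - a i‖ := by
  have := add_sum_erase univ (fun j => ‖a j‖) (mem_univ i)
  linarith [norm_sub_norm_le z (a i)]

theorem stmt_7_general {N : ℕ} (p : Fin N → Fin N → ℕ → ℝ) (P : Matrix (Fin N) (Fin N) ℝ)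
    (hp : ∀ i j k, 0 ≤ p i j k)
    (hPsum : ∀ i j, HasSum (p i j) (P i j))
    (hstoch : ∀ i, ∑ j, P i j = 1)
    (A : Fin N → Fin N → ℂ → ℂ)
    (hAval : ∀ i j, ∀ z : ℂ, ‖z‖ ≤ 1 → A i j z = ∑' k, (p i j k : ℂ) * z ^ k)
    (hstrict : ∀ i j, ∀ z : ℂ, ‖z‖ = 1 → z ≠ 1 → 0 < P i j → ‖A i j z‖ < P i j)
    (M : ℂ → Matrix (Fin N) (Fin N) ℂ)
    (hM : ∀ z i j, M z i j = if i = j then z - A i i z else -(A i j z)) :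
    ∀ z : ℂ, ‖z‖ = 1 → z ≠ 1 →
      (∀ i, ∑ j ∈ Finset.univ.erase i, ‖M z i j‖ < ‖M z i i‖) ∧ (M z).det ≠ 0 := by
  intro z hz hz1
  have hbound : ∀ i j, ‖A i j z‖ ≤ P i j := fun i j => by
    rw [hAval i j z hz.le]
    exact norm_tsum_ofReal_mul_pow_le (hp i j) (hPsum i j) hz.le
  have hrow : ∀ i, ∑ j, ‖A i j z‖ < ‖z‖ := fun i => by
    rw [hz, ← hstoch i]
    exact sum_lt_sum_of_lt_of_pos (fun j _ => hbound i j)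
      (fun j _ => hstrict i j z hz hz1) (by rw [hstoch i]; exact one_pos)
  have hdom : ∀ i, ∑ j ∈ univ.erase i, ‖M z i j‖ < ‖M z i i‖ := fun i => by
    have hoff : ∀ j ∈ univ.erase i, ‖M z i j‖ = ‖A i j z‖ := fun j hj => by
      rw [hM, if_neg (ne_of_mem_erase hj).symm, norm_neg]
    rw [sum_congr rfl hoff, hM, if_pos rfl]
    exact sum_erase_norm_lt_norm_sub (hrow i) i
  exact ⟨hdom, det_ne_zero_of_sum_row_lt_diag hdom⟩

/-- Let `A i j` be joint probability generating functions (power series with nonnegative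
coefficients) with `A i j 1 = P i j`, `P` stochastic with `P i i < 1`, and with the strict
modulus decrease `‖A i j z‖ < P i j` for `‖z‖ = 1`, `z ≠ 1`, whenever `P i j > 0`.
Then `M(z) = z·I - A(z)` is strictly diagonally dominant by rows for every `z` on the
unit circle with `z ≠ 1`, and hence `det M(z) ≠ 0` there. -/
theorem stmt_7 {N : ℕ} (p : Fin N → Fin N → ℕ → ℝ) (P : Matrix (Fin N) (Fin N) ℝ)
    (hp : ∀ i j k, 0 ≤ p i j k)
    (hPsum : ∀ i j, HasSum (p i j) (P i j))
    (hstoch : ∀ i, ∑ j, P i j = 1)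
    (hdiag : ∀ i, P i i < 1)
    (A : Fin N → Fin N → ℂ → ℂ)
    (hAval : ∀ i j, ∀ z : ℂ, ‖z‖ ≤ 1 → A i j z = ∑' k, (p i j k : ℂ) * z ^ k)
    (hstrict : ∀ i j, ∀ z : ℂ, ‖z‖ = 1 → z ≠ 1 → 0 < P i j → ‖A i j z‖ < P i j)
    (M : ℂ → Matrix (Fin N) (Fin N) ℂ)
    (hM : ∀ z i j, M z i j = if i = j then z - A i i z else -(A i j z)) :
    ∀ z : ℂ, ‖z‖ = 1 → z ≠ 1 →
      (∀ i, ∑ j ∈ Finset.univ.erase i, ‖M z i j‖ < ‖M z i i‖) ∧ (M z).det ≠ 0 :=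
  stmt_7_general p P hp hPsum hstoch A hAval hstrict M hM
end

section
/- Let M(z) = z·I - A(z) with A(z) as above and suppose the stability condition ρ = Σ_i π_i Σ_j A'_{ij}(1) < 1 holds, where π is the stationary distribution of the stochastic matrix P = A(1). Then z = 1 is a zero of det M(z), and (d/dz) det M(z) |_{z=1} > 0; in particular z = 1 is a simple zero of det M(z). -/
open Finset

section AuxLemmas
open Matrix

lemma aux_pow_nonneg {N : ℕ} (P : Matrix (Fin N) (Fin N) ℝ) (hP : ∀ i j, 0 ≤ P i j) :
    ∀ n i j, 0 ≤ (P ^ n) i j := by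
  intro n
  induction n with
  | zero =>
    intro i j
    rw [pow_zero, Matrix.one_apply]
    split <;> norm_num
  | succ n ih =>
    intro i j
    rw [pow_succ, Matrix.mul_apply]
    exact Finset.sum_nonneg fun k _ => mul_nonneg (ih i k) (hP k j)

lemma aux_reach {N : ℕ} (P : Matrix (Fin N) (Fin N) ℝ) (hP : ∀ a b, 0 ≤ P a b)
    (s : Set (Fin N)) (i : Fin N) (hi : i ∉ s)
    (hclosed : ∀ j ∈ s, ∀ k, 0 < P j k → k ∈ s) :
    ∀ n, ∀ j ∈ s, (P ^ n) j i = 0 := by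
  intro n
  induction n with
  | zero =>
    intro j hj
    rw [pow_zero, Matrix.one_apply_ne]
    exact fun h => hi (h ▸ hj)
  | succ n ih =>
    intro j hj
    rw [pow_succ', Matrix.mul_apply]
    refine Finset.sum_eq_zero fun k _ => ?_
    rcases lt_or_eq_of_le (hP j k) with hpos | h0
    · rw [ih k (hclosed j hj k hpos), mul_zero]
    · rw [← h0, zero_mul]

lemma aux_closed {N : ℕ} (P : Matrix (Fin N) (Fin N) ℝ) (hP : ∀ a b, 0 ≤ P a b)
    (hirr : ∀ i j, ∃ n : ℕ, 1 ≤ n ∧ 0 < (P ^ n) i j)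
    (s : Set (Fin N)) (hne : ∃ j, j ∈ s)
    (hclosed : ∀ j ∈ s, ∀ k, 0 < P j k → k ∈ s) : ∀ i, i ∈ s := by
  intro i
  by_contra hi
  obtain ⟨j, hj⟩ := hne
  obtain ⟨n, -, hpos⟩ := hirr j i
  rw [aux_reach P hP s i hi hclosed n j hj] at hpos
  exact lt_irrefl 0 hpos

lemma aux_ker_const {N : ℕ} (P : Matrix (Fin N) (Fin N) ℝ) (hP : ∀ a b, 0 ≤ P a b)
    (hstoch : ∀ i, ∑ j, P i j = 1) (hirr : ∀ i j, ∃ n : ℕ, 1 ≤ n ∧ 0 < (P ^ n) i j)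
    (v : Fin N → ℝ) (hv : ∀ i, v i = ∑ j, P i j * v j) (i i' : Fin N) : v i = v i' := by
  obtain ⟨i₀, -, hmax⟩ := Finset.exists_max_image Finset.univ v ⟨i, Finset.mem_univ i⟩
  set m := v i₀ with hm
  have hclosed : ∀ j ∈ {k | v k = m}, ∀ k, 0 < P j k → k ∈ {k | v k = m} := by
    intro j hj k hpk
    have hsum : ∑ l, P j l * (m - v l) = 0 := by
      have h1 : ∑ l, P j l * (m - v l) = (∑ l, P j l * m) - ∑ l, P j l * v l := by
        rw [← Finset.sum_sub_distrib]
        exact Finset.sum_congr rfl fun l _ => by ring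
      rw [h1, ← Finset.sum_mul, hstoch j, ← hv j, one_mul]
      have : v j = m := hj
      linarith
    have := (Finset.sum_eq_zero_iff_of_nonneg (fun l _ =>
      mul_nonneg (hP j l) (sub_nonneg.mpr (hmax l (Finset.mem_univ l))))).mp hsum k (Finset.mem_univ k)
    have hk : m - v k = 0 := by
      rcases mul_eq_zero.mp this with h | h
      · exact absurd h (ne_of_gt hpk)
      · exact h
    have : v k = m := by linarith
    exact this
  have hall := aux_closed P hP hirr {k | v k = m} ⟨i₀, rfl⟩ hclosed
  have h1 : v i = m := hall i
  have h2 : v i' = m := hall i'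
  rw [h1, h2]

lemma aux_stat_pow {N : ℕ} (P : Matrix (Fin N) (Fin N) ℝ) (w : Fin N → ℝ)
    (hw : ∀ j, ∑ i, w i * P i j = w j) : ∀ n j, ∑ i, w i * (P ^ n) i j = w j := by
  intro n
  induction n with
  | zero =>
    intro j
    simp [Matrix.one_apply, mul_ite, Finset.sum_ite_eq']
  | succ n ih =>
    intro j
    calc ∑ i, w i * (P ^ (n + 1)) i j = ∑ i, ∑ l, w i * ((P ^ n) i l * P l j) := by
          simp [pow_succ, Matrix.mul_apply, Finset.mul_sum]
      _ = ∑ l, (∑ i, w i * (P ^ n) i l) * P l j := by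
          rw [Finset.sum_comm]
          exact Finset.sum_congr rfl fun l _ => by rw [Finset.sum_mul]; exact Finset.sum_congr rfl fun i _ => by ring
      _ = ∑ l, w l * P l j := Finset.sum_congr rfl fun l _ => by rw [ih l]
      _ = w j := hw j

lemma aux_pi_pos {N : ℕ} (P : Matrix (Fin N) (Fin N) ℝ) (hP : ∀ a b, 0 ≤ P a b)
    (hirr : ∀ i j, ∃ n : ℕ, 1 ≤ n ∧ 0 < (P ^ n) i j)
    (π : Fin N → ℝ) (hπpos : ∀ i, 0 ≤ π i) (hπsum : ∑ i, π i = 1)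
    (hπstat : ∀ j, ∑ i, π i * P i j = π j) : ∀ j, 0 < π j := by
  have h1 : ∃ i, 0 < π i := by
    by_contra h
    push_neg at h
    have : ∑ i, π i = 0 := le_antisymm (Finset.sum_nonpos fun i _ => h i)
      (Finset.sum_nonneg fun i _ => hπpos i)
    rw [hπsum] at this
    norm_num at this
  obtain ⟨i, hi⟩ := h1
  intro j
  obtain ⟨n, -, hn⟩ := hirr i j
  have hs := aux_stat_pow P π hπstat n j
  calc (0:ℝ) < π i * (P ^ n) i j := mul_pos hi hn
    _ ≤ ∑ k, π k * (P ^ n) k j := Finset.single_le_sum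
        (fun k _ => mul_nonneg (hπpos k) (aux_pow_nonneg P hP n k j)) (Finset.mem_univ i)
    _ = π j := hs

lemma aux_stat_unique {N : ℕ} (hN : 0 < N) (P : Matrix (Fin N) (Fin N) ℝ)
    (hP : ∀ a b, 0 ≤ P a b)
    (hirr : ∀ i j, ∃ n : ℕ, 1 ≤ n ∧ 0 < (P ^ n) i j)
    (π : Fin N → ℝ) (hπpos : ∀ i, 0 ≤ π i) (hπsum : ∑ i, π i = 1)
    (hπstat : ∀ j, ∑ i, π i * P i j = π j)
    (w : Fin N → ℝ) (hw : ∀ j, ∑ i, w i * P i j = w j) :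
    ∃ c, ∀ j, w j = c * π j := by
  have hπ := aux_pi_pos P hP hirr π hπpos hπsum hπstat
  obtain ⟨j₀, -, hmin⟩ := Finset.exists_min_image Finset.univ (fun j => w j / π j)
    ⟨⟨0, hN⟩, Finset.mem_univ _⟩
  set c := w j₀ / π j₀ with hc
  set u : Fin N → ℝ := fun j => w j - c * π j with hu
  have hu0 : ∀ j, 0 ≤ u j := by
    intro j
    have h1 : c ≤ w j / π j := hmin j (Finset.mem_univ j)
    have h2 : c * π j ≤ w j := (le_div_iff₀ (hπ j)).mp h1
    simp only [hu]
    linarith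
  have huj₀ : u j₀ = 0 := by
    simp only [hu, hc]
    rw [div_mul_cancel₀ _ (ne_of_gt (hπ j₀))]
    ring
  have hust : ∀ j, ∑ i, u i * P i j = u j := by
    intro j
    simp only [hu, sub_mul]
    rw [Finset.sum_sub_distrib, hw j]
    have : ∑ i, c * π i * P i j = c * π j := by
      rw [← hπstat j, Finset.mul_sum]
      exact Finset.sum_congr rfl fun i _ => by ring
    rw [this]
  refine ⟨c, fun j => ?_⟩
  have huj : u j = 0 := by
    obtain ⟨n, -, hn⟩ := hirr j j₀
    have hs := aux_stat_pow P u hust n j₀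
    rw [huj₀] at hs
    have hterm := (Finset.sum_eq_zero_iff_of_nonneg (fun k _ =>
      mul_nonneg (hu0 k) (aux_pow_nonneg P hP n k j₀))).mp hs j (Finset.mem_univ j)
    exact (mul_eq_zero.mp hterm).resolve_right (ne_of_gt hn)
  have : w j - c * π j = 0 := huj
  linarith

lemma aux_det_pos {N : ℕ} (P : Matrix (Fin N) (Fin N) ℝ) (hP : ∀ a b, 0 ≤ P a b)
    (hstoch : ∀ i, ∑ j, P i j = 1) (hirr : ∀ i j, ∃ n : ℕ, 1 ≤ n ∧ 0 < (P ^ n) i j)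
    (i : Fin N) :
    0 < (((1 : Matrix (Fin N) (Fin N) ℝ) - P).updateRow i (Pi.single i 1)).det := by
  set C : ℝ → Matrix (Fin N) (Fin N) ℝ := fun t => Matrix.of fun r s =>
    if r = i then (if s = i then (1:ℝ) else 0) else (if r = s then (1:ℝ) else 0) - t * P r s
    with hC
  have hcont : Continuous fun t => (C t).det := by
    apply Continuous.matrix_det
    apply continuous_matrix
    intro r s
    simp only [hC, Matrix.of_apply]
    split_ifs <;> fun_prop
  have h0 : C 0 = 1 := by
    ext r s
    simp only [hC, Matrix.of_apply, Matrix.one_apply]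
    split_ifs with h1 h2 h2 <;> simp_all
  have hne : ∀ t ∈ Set.Icc (0:ℝ) 1, (C t).det ≠ 0 := by
    rintro t ⟨ht0, ht1⟩ hdet
    obtain ⟨v, hvne, hv⟩ := (Matrix.exists_mulVec_eq_zero_iff).mpr hdet
    have hvi : v i = 0 := by
      have h := congr_fun hv i
      simp only [Matrix.mulVec, dotProduct, hC, Matrix.of_apply, if_pos rfl,
        Pi.zero_apply, ite_mul, one_mul, zero_mul, Finset.sum_ite_eq'] at h
      simpa using h
    have hrow : ∀ r, r ≠ i → v r = t * ∑ s, P r s * v s := by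
      intro r hr
      have h := congr_fun hv r
      simp only [Matrix.mulVec, dotProduct, hC, Matrix.of_apply, if_neg hr,
        Pi.zero_apply] at h
      have h2 : ∑ s, ((if r = s then (1:ℝ) else 0) - t * P r s) * v s
          = (∑ s, (if r = s then (1:ℝ) else 0) * v s) - t * ∑ s, P r s * v s := by
        rw [Finset.mul_sum, ← Finset.sum_sub_distrib]
        exact Finset.sum_congr rfl fun s _ => by ring
      rw [h2] at h
      have h3 : ∑ s, (if r = s then (1:ℝ) else 0) * v s = v r := by
        simp [ite_mul, Finset.sum_ite_eq]
      rw [h3] at h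
      linarith
    obtain ⟨j, -, hmax⟩ := Finset.exists_max_image Finset.univ (fun k => |v k|)
      ⟨i, Finset.mem_univ i⟩
    set m := |v j| with hm
    have hm0 : 0 < m := by
      have : v ≠ 0 := hvne
      obtain ⟨k, hk⟩ := Function.ne_iff.mp this
      exact lt_of_lt_of_le (abs_pos.mpr hk) (hmax k (Finset.mem_univ k))
    have hiS : i ∉ {k | |v k| = m} := by
      intro h
      have : |v i| = m := h
      rw [hvi, abs_zero] at this
      linarith
    have hclosed : ∀ r ∈ {k | |v k| = m}, ∀ k, 0 < P r k → k ∈ {k | |v k| = m} := by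
      intro r hr k hpk
      have hvr : |v r| = m := hr
      have hri : r ≠ i := by
        intro h
        rw [h, hvi, abs_zero] at hvr
        linarith
      have h1 : m ≤ t * ∑ s, P r s * |v s| := by
        calc m = |v r| := hvr.symm
          _ = |t * ∑ s, P r s * v s| := by rw [hrow r hri]
          _ = t * |∑ s, P r s * v s| := by rw [abs_mul, abs_of_nonneg ht0]
          _ ≤ t * ∑ s, |P r s * v s| :=
              mul_le_mul_of_nonneg_left (Finset.abs_sum_le_sum_abs _ _) ht0
          _ = t * ∑ s, P r s * |v s| := by
              congr 1
              exact Finset.sum_congr rfl fun s _ => by rw [abs_mul, abs_of_nonneg (hP r s)]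
      have h2 : ∑ s, P r s * |v s| ≤ m := by
        calc ∑ s, P r s * |v s| ≤ ∑ s, P r s * m :=
              Finset.sum_le_sum fun s _ => mul_le_mul_of_nonneg_left (hmax s (Finset.mem_univ s)) (hP r s)
          _ = m := by rw [← Finset.sum_mul, hstoch r, one_mul]
      have h3 : 0 ≤ ∑ s, P r s * |v s| :=
        Finset.sum_nonneg fun s _ => mul_nonneg (hP r s) (abs_nonneg _)
      have h4 : t * ∑ s, P r s * |v s| ≤ ∑ s, P r s * |v s| := by nlinarith
      have h5 : ∑ s, P r s * |v s| = m := le_antisymm h2 (le_trans h1 h4)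
      have h6 : ∑ s, P r s * (m - |v s|) = 0 := by
        have : ∑ s, P r s * (m - |v s|) = (∑ s, P r s * m) - ∑ s, P r s * |v s| := by
          rw [← Finset.sum_sub_distrib]
          exact Finset.sum_congr rfl fun s _ => by ring
        rw [this, ← Finset.sum_mul, hstoch r, one_mul, h5]
        ring
      have h7 := (Finset.sum_eq_zero_iff_of_nonneg (fun s _ =>
        mul_nonneg (hP r s) (sub_nonneg.mpr (hmax s (Finset.mem_univ s))))).mp h6 k (Finset.mem_univ k)
      have h8 : m - |v k| = 0 := (mul_eq_zero.mp h7).resolve_left (ne_of_gt hpk)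
      have : |v k| = m := by linarith
      exact this
    exact hiS (aux_closed P hP hirr {k | |v k| = m} ⟨j, rfl⟩ hclosed i)
  have h1pos : 0 < (C 1).det := by
    rcases lt_trichotomy ((C 1).det) 0 with hlt | heq | hgt
    · exfalso
      have hmem : (0:ℝ) ∈ Set.Icc ((C 1).det) ((C 0).det) := by
        rw [h0, Matrix.det_one]
        exact ⟨le_of_lt hlt, by norm_num⟩
      obtain ⟨t, ht, hFt⟩ := intermediate_value_Icc' (by norm_num : (0:ℝ) ≤ 1)
        hcont.continuousOn hmem
      exact hne t ht hFt
    · exact absurd heq (hne 1 (by constructor <;> norm_num))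
    · exact hgt
  have hCeq : C 1 = ((1 : Matrix (Fin N) (Fin N) ℝ) - P).updateRow i (Pi.single i 1) := by
    ext r s
    rw [Matrix.updateRow_apply]
    simp only [hC, Matrix.of_apply, Matrix.sub_apply, Matrix.one_apply, Pi.single_apply]
    split_ifs <;> ring
  rw [← hCeq]
  exact h1pos

lemma aux_det_deriv {n : ℕ} (f : ℂ → Matrix (Fin n) (Fin n) ℂ)
    (f' : Matrix (Fin n) (Fin n) ℂ) (x : ℂ)
    (hf : ∀ i j, HasDerivAt (fun z => f z i j) (f' i j) x) :
    HasDerivAt (fun z => (f z).det)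
      (∑ i, ((f x).updateCol i (fun r => f' r i)).det) x := by
  have key : HasDerivAt (fun z => (f z).det)
      (∑ σ : Equiv.Perm (Fin n), (Equiv.Perm.sign σ : ℂ) *
        ∑ i, (∏ j ∈ Finset.univ.erase i, f x (σ j) j) * f' (σ i) i) x := by
    have h1 : (fun z => (f z).det) = fun z =>
        ∑ σ : Equiv.Perm (Fin n), (Equiv.Perm.sign σ : ℂ) * ∏ i, f z (σ i) i := by
      funext z
      rw [Matrix.det_apply']
    rw [h1]
    apply HasDerivAt.fun_sum
    intro σ _
    have hprod : HasDerivAt (fun z => ∏ i, f z (σ i) i)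
        (∑ i, (∏ j ∈ Finset.univ.erase i, f x (σ j) j) * f' (σ i) i) x := by
      have := HasDerivAt.fun_finsetProd (u := Finset.univ)
        (f := fun i z => f z (σ i) i) (f' := fun i => f' (σ i) i) (x := x)
        (fun i _ => hf (σ i) i)
      simpa [smul_eq_mul] using this
    exact hprod.const_mul _
  convert key using 1
  have h2 : ∀ σ : Equiv.Perm (Fin n), (Equiv.Perm.sign σ : ℂ) *
      (∑ i, (∏ j ∈ Finset.univ.erase i, f x (σ j) j) * f' (σ i) i)
      = ∑ i, (Equiv.Perm.sign σ : ℂ) *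
        ((∏ j ∈ Finset.univ.erase i, f x (σ j) j) * f' (σ i) i) := fun σ => Finset.mul_sum _ _ _
  rw [Finset.sum_congr rfl fun σ _ => h2 σ, Finset.sum_comm]
  apply Finset.sum_congr rfl
  intro i _
  rw [Matrix.det_apply']
  apply Finset.sum_congr rfl
  intro σ _
  congr 1
  have h3 : ∀ j, ((f x).updateCol i fun r => f' r i) (σ j) j
      = if j = i then f' (σ j) i else f x (σ j) j := by
    intro j
    rw [Matrix.updateCol_apply]
  rw [Finset.prod_congr rfl fun j _ => h3 j]
  rw [← Finset.mul_prod_erase Finset.univ _ (Finset.mem_univ i)]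
  rw [if_pos rfl]
  rw [mul_comm]
  congr 1
  apply Finset.prod_congr rfl
  intro j hj
  rw [if_neg (Finset.ne_of_mem_erase hj)]

end AuxLemmas

open Matrix in
/-- For `M(z) = z·I - A(z)`, with `A` a matrix of joint PGFs whose value at 1 is the
irreducible stochastic matrix `P`, `π` the stationary distribution of `P`,
`α i j = A_{ij}'(1)` and stability `ρ = Σ_i π_i Σ_j α_{ij} < 1`:
`z = 1` is a zero of `det M(z)` and `(d/dz) det M(z)|_{z=1} > 0`; in particular
`z = 1` is a simple zero of `det M(z)`. -/
theorem stmt_11 {N : ℕ} (p : Fin N → Fin N → ℕ → ℝ) (P : Matrix (Fin N) (Fin N) ℝ)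
    (hp : ∀ i j k, 0 ≤ p i j k)
    (hPsum : ∀ i j, HasSum (p i j) (P i j))
    (hstoch : ∀ i, ∑ j, P i j = 1)
    (hirr : ∀ i j, ∃ n : ℕ, 1 ≤ n ∧ 0 < (P ^ n) i j)
    (A : Fin N → Fin N → ℂ → ℂ)
    (hAval : ∀ i j, ∀ z : ℂ, ‖z‖ ≤ 1 → A i j z = ∑' k, (p i j k : ℂ) * z ^ k)
    (hAan : ∀ i j, ∀ z : ℂ, ‖z‖ ≤ 1 → AnalyticAt ℂ (A i j) z)
    (α : Fin N → Fin N → ℝ)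
    (hα : ∀ i j, HasDerivAt (A i j) ((α i j : ℝ) : ℂ) 1)
    (π : Fin N → ℝ) (hπpos : ∀ i, 0 ≤ π i) (hπsum : ∑ i, π i = 1)
    (hπstat : ∀ j, ∑ i, π i * P i j = π j)
    (ρ : ℝ) (hρ : ρ = ∑ i, π i * ∑ j, α i j) (hρ1 : ρ < 1)
    (M : ℂ → Matrix (Fin N) (Fin N) ℂ)
    (hM : ∀ z i j, M z i j = if i = j then z - A i i z else -(A i j z)) :
    (M 1).det = 0 ∧
    (deriv (fun z => (M z).det) 1).im = 0 ∧
    0 < (deriv (fun z => (M z).det) 1).re ∧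
    deriv (fun z => (M z).det) 1 ≠ 0 := by
  -- N is positive
  have hN : 0 < N := by
    rcases Nat.eq_zero_or_pos N with h | h
    · subst h
      simp at hπsum
    · exact h
  set j₀ : Fin N := ⟨0, hN⟩ with hj₀
  -- P is entrywise nonneg
  have hPnn : ∀ a b, 0 ≤ P a b := fun a b =>
    hasSum_le (fun k => hp a b k) hasSum_zero (hPsum a b)
  -- the real matrix B = I - P
  set B : Matrix (Fin N) (Fin N) ℝ := 1 - P with hB
  have hBapp : ∀ a b, B a b = (if a = b then 1 else 0) - P a b := by
    intro a b
    simp [hB, Matrix.sub_apply, Matrix.one_apply]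
  -- det B = 0
  have hdetB : B.det = 0 := by
    rw [← Matrix.exists_mulVec_eq_zero_iff]
    refine ⟨fun _ => 1, ?_, ?_⟩
    · intro h
      have := congr_fun h j₀
      norm_num at this
    · funext a
      simp only [Matrix.mulVec, dotProduct, mul_one, Pi.zero_apply]
      rw [Finset.sum_congr rfl fun b _ => hBapp a b, Finset.sum_sub_distrib, hstoch a]
      simp
  -- value of A at 1
  have hA1 : ∀ i j, A i j 1 = (P i j : ℂ) := by
    intro i j
    have h := hAval i j 1 (by norm_num)
    have hs : HasSum (fun k => ((p i j k : ℝ) : ℂ) * (1:ℂ) ^ k) ((P i j : ℝ) : ℂ) := by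
      simpa using (hPsum i j).mapL Complex.ofRealCLM
    rw [h, hs.tsum_eq]
  -- M 1 is the complexification of B
  have hM1 : M 1 = Complex.ofRealHom.mapMatrix B := by
    ext a b
    rw [hM 1 a b]
    simp only [RingHom.mapMatrix_apply, Matrix.map_apply, Complex.ofRealHom_eq_coe, hBapp]
    rcases eq_or_ne a b with h | h
    · subst h
      rw [if_pos rfl, hA1]
      norm_num
    · rw [if_neg h, if_neg h, hA1]
      norm_num
  -- first conclusion
  have hdetM1 : (M 1).det = 0 := by
    rw [hM1, ← RingHom.map_det, hdetB, map_zero]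
  -- adjugate structure over ℝ
  have hcolconst : ∀ j k, B.adjugate j k = B.adjugate j₀ k := by
    intro j k
    have hmul : B * B.adjugate = 0 := by
      rw [Matrix.mul_adjugate, hdetB, zero_smul]
    have hv : ∀ a, B.adjugate a k = ∑ l, P a l * B.adjugate l k := by
      intro a
      have h : (B * B.adjugate) a k = 0 := by rw [hmul]; rfl
      rw [Matrix.mul_apply] at h
      rw [Finset.sum_congr rfl fun l _ => by rw [hBapp a l, sub_mul]] at h
      rw [Finset.sum_sub_distrib] at h
      have h1 : ∑ l, (if a = l then (1:ℝ) else 0) * B.adjugate l k = B.adjugate a k := by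
        simp [ite_mul, Finset.sum_ite_eq]
      rw [h1, sub_eq_zero] at h
      exact h
    exact aux_ker_const P hPnn hstoch hirr (fun l => B.adjugate l k) hv j j₀
  set f : Fin N → ℝ := fun k => B.adjugate j₀ k with hf
  have hstatf : ∀ k, ∑ l, f l * P l k = f k := by
    intro k
    have hmul : B.adjugate * B = 0 := by
      rw [Matrix.adjugate_mul, hdetB, zero_smul]
    have h : (B.adjugate * B) j₀ k = 0 := by rw [hmul]; rfl
    rw [Matrix.mul_apply] at h
    rw [Finset.sum_congr rfl fun l _ => by rw [hBapp l k, mul_sub]] at h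
    rw [Finset.sum_sub_distrib] at h
    have h1 : ∑ l, B.adjugate j₀ l * (if l = k then (1:ℝ) else 0) = f k := by
      simp [mul_ite, Finset.sum_ite_eq']
      rfl
    rw [h1, sub_eq_zero] at h
    have h2 : ∀ l, B.adjugate j₀ l = f l := fun l => rfl
    rw [← h]
  obtain ⟨c, hcπ⟩ := aux_stat_unique hN P hPnn hirr π hπpos hπsum hπstat f hstatf
  have hadjB : ∀ j k, B.adjugate j k = c * π k := by
    intro j k
    rw [hcolconst j k]
    exact hcπ k
  -- c is positive
  have hπ := aux_pi_pos P hPnn hirr π hπpos hπsum hπstat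
  have hcpos : 0 < c := by
    have h1 : 0 < B.adjugate j₀ j₀ := by
      rw [Matrix.adjugate_apply]
      exact aux_det_pos P hPnn hstoch hirr j₀
    rw [hadjB j₀ j₀] at h1
    by_contra hcn
    push_neg at hcn
    nlinarith [hπ j₀]
  -- derivative of entries
  set Md : Matrix (Fin N) (Fin N) ℂ := Matrix.of fun r s =>
    ((if r = s then (1:ℝ) else 0) - α r s : ℝ) with hMd
  have hMD : ∀ r s, HasDerivAt (fun z => M z r s) (Md r s) 1 := by
    intro r s
    have hfun : (fun z => M z r s) = fun z => if r = s then z - A r r z else -(A r s z) := by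
      funext z
      exact hM z r s
    rw [hfun]
    rcases eq_or_ne r s with h | h
    · subst h
      simp only [if_pos rfl]
      have : Md r r = 1 - (α r r : ℂ) := by
        simp [hMd]
      rw [this]
      exact (hasDerivAt_id 1).sub (hα r r)
    · simp only [if_neg h]
      have : Md r s = -(α r s : ℂ) := by
        simp [hMd, if_neg h]
      rw [this]
      exact (hα r s).neg
  -- derivative of the determinant
  have hD := aux_det_deriv M Md 1 hMD
  -- compute the derivative value
  have hval : (∑ i, ((M 1).updateCol i (fun r => Md r i)).det) = ((c * (1 - ρ) : ℝ) : ℂ) := by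
    have h1 : ∀ i, ((M 1).updateCol i (fun r => Md r i)).det
        = ∑ r, (M 1).adjugate i r * Md r i := by
      intro i
      rw [← Matrix.cramer_apply, Matrix.cramer_eq_adjugate_mulVec]
      rfl
    rw [Finset.sum_congr rfl fun i _ => h1 i]
    have hadjM : ∀ i r, (M 1).adjugate i r = ((c * π r : ℝ) : ℂ) := by
      intro i r
      rw [hM1, ← RingHom.map_adjugate]
      simp only [RingHom.mapMatrix_apply, Matrix.map_apply, Complex.ofRealHom_eq_coe]
      rw [hadjB i r]
    have h2 : ∀ i r, (M 1).adjugate i r * Md r i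
        = (((c * π r) * ((if r = i then (1:ℝ) else 0) - α r i) : ℝ) : ℂ) := by
      intro i r
      rw [hadjM i r]
      simp only [hMd, Matrix.of_apply]
      push_cast
      ring
    rw [Finset.sum_congr rfl fun i _ => Finset.sum_congr rfl fun r _ => h2 i r]
    have hcast : (∑ i, ∑ r, ((c * π r * ((if r = i then (1:ℝ) else 0) - α r i) : ℝ) : ℂ))
        = ((∑ i, ∑ r, c * π r * ((if r = i then (1:ℝ) else 0) - α r i) : ℝ) : ℂ) := by
      push_cast
      rfl
    rw [hcast]
    congr 1
    rw [Finset.sum_comm]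
    have h3 : ∀ r, ∑ i, c * π r * ((if r = i then (1:ℝ) else 0) - α r i)
        = c * π r * (1 - ∑ i, α r i) := by
      intro r
      rw [← Finset.mul_sum]
      congr 1
      rw [Finset.sum_sub_distrib]
      congr 1
      simp [Finset.sum_ite_eq]
    rw [Finset.sum_congr rfl fun r _ => h3 r]
    have h4 : ∀ r, c * π r * (1 - ∑ i, α r i) = c * π r - c * (π r * ∑ i, α r i) :=
      fun r => by ring
    rw [Finset.sum_congr rfl fun r _ => h4 r, Finset.sum_sub_distrib, ← Finset.mul_sum,
      ← Finset.mul_sum, hπsum, hρ]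
    ring
  have hderiv : deriv (fun z => (M z).det) 1 = ((c * (1 - ρ) : ℝ) : ℂ) := by
    rw [hD.deriv, hval]
  have hpos : 0 < c * (1 - ρ) := mul_pos hcpos (by linarith)
  refine ⟨hdetM1, ?_, ?_, ?_⟩
  · rw [hderiv, Complex.ofReal_im]
  · rw [hderiv, Complex.ofReal_re]
    exact hpos
  · rw [hderiv]
    exact Complex.ofReal_ne_zero.mpr (ne_of_gt hpos)
end

section
/- For the transient generating functions f_j(r,z) = Σ_{n≥0} r^n E[z^{X_n} 1{J_{n+1}=j}] with deterministic initial state X_0 = x_0, the system M(r,z)^T f(r,z) = b(r,z) holds, where M(r,z) = zI - rA(z) and b(r,z)_j = z^{x_0+1} P(J_1 = j) + r(B(z)-1) Σ_i A_{ij}(z) f_i(r,0), for 0 ≤ r < 1 and 0 < |z| ≤ 1. -/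
open Finset

/-- Transient analysis: the generating functions
`f_j(r,z) = Σ_{n≥0} r^n E[z^{X_n} 1{J_{n+1}=j}]`, with deterministic initial state
`X_0 = x_0`, satisfy `M(r,z)ᵀ f(r,z) = b(r,z)`, i.e.
`z f_j(r,z) - r Σ_i A_{ij}(z) f_i(r,z)
  = z^{x_0+1} P(J_1 = j) + r (B(z)-1) Σ_i A_{ij}(z) f_i(r,0)`,
for `0 ≤ r < 1` and `0 < |z| ≤ 1`. -/
theorem stmt_15 {N : ℕ}
    (g : ℕ → Fin N → ℂ → ℂ)
    (Apgf : Fin N → Fin N → ℂ → ℂ) (Bpgf : ℂ → ℂ)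
    (hgbdd : ∀ n j, ∀ z : ℂ, ‖z‖ ≤ 1 → ‖g n j z‖ ≤ 1)
    (hrec : ∀ n, 1 ≤ n → ∀ j, ∀ z : ℂ, ‖z‖ ≤ 1 → z ≠ 0 →
      z * g n j z
        = ∑ i, g (n-1) i z * Apgf i j z
          + (Bpgf z - 1) * ∑ i, Apgf i j z * g (n-1) i 0)
    (x₀ : ℕ) (pJ : Fin N → ℝ)
    (hinit : ∀ j, ∀ z : ℂ, ‖z‖ ≤ 1 → g 0 j z = z ^ x₀ * ((pJ j : ℝ) : ℂ))
    (r : ℝ) (hr0 : 0 ≤ r) (hr1 : r < 1)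
    (F : Fin N → ℂ → ℂ)
    (hF : ∀ j, ∀ z : ℂ, ‖z‖ ≤ 1 → F j z = ∑' n : ℕ, ((r : ℝ) : ℂ) ^ n * g n j z) :
    ∀ z : ℂ, ‖z‖ ≤ 1 → z ≠ 0 → ∀ j,
      z * F j z - ((r : ℝ) : ℂ) * ∑ i, Apgf i j z * F i z
        = z ^ (x₀ + 1) * ((pJ j : ℝ) : ℂ)
          + ((r : ℝ) : ℂ) * (Bpgf z - 1) * ∑ i, Apgf i j z * F i 0 := by
  intro z hz hz0 j
  set rc : ℂ := ((r : ℝ) : ℂ) with hrc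
  have hrcn : ‖rc‖ = r := by
    simp [hrc, Complex.norm_real, abs_of_nonneg hr0]
  have hsum : ∀ (i : Fin N) (w : ℂ), ‖w‖ ≤ 1 → Summable (fun n => rc ^ n * g n i w) := by
    intro i w hw
    apply Summable.of_norm_bounded (g := fun n => r ^ n) (summable_geometric_of_lt_one hr0 hr1)
    intro n
    rw [norm_mul, norm_pow, hrcn]
    calc r ^ n * ‖g n i w‖ ≤ r ^ n * 1 :=
          mul_le_mul_of_nonneg_left (hgbdd n i w hw) (pow_nonneg hr0 n)
      _ = r ^ n := mul_one _
  have hz0' : ‖(0 : ℂ)‖ ≤ 1 := by simp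
  have hF0 : ∀ i, F i 0 = ∑' n, rc ^ n * g n i 0 := fun i => hF i 0 hz0'
  have hFz : ∀ i, F i z = ∑' n, rc ^ n * g n i z := fun i => hF i z hz
  have hsA : Summable (fun n => ∑ i, (rc ^ n * g n i z) * Apgf i j z) :=
    summable_sum fun i _ => (hsum i z hz).mul_right _
  have hsB : Summable (fun n => ∑ i, Apgf i j z * (rc ^ n * g n i 0)) :=
    summable_sum fun i _ => (hsum i 0 hz0').mul_left _
  have hA : ∑' n, ∑ i, (rc ^ n * g n i z) * Apgf i j z = ∑ i, Apgf i j z * F i z := by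
    rw [Summable.tsum_finsetSum fun i _ => (hsum i z hz).mul_right _]
    refine Finset.sum_congr rfl fun i _ => ?_
    rw [tsum_mul_right, hFz]; ring
  have hB : ∑' n, ∑ i, Apgf i j z * (rc ^ n * g n i 0) = ∑ i, Apgf i j z * F i 0 := by
    rw [Summable.tsum_finsetSum fun i _ => (hsum i 0 hz0').mul_left _]
    refine Finset.sum_congr rfl fun i _ => ?_
    rw [tsum_mul_left, hF0]
  have key : z * F j z
      = z * g 0 j z + rc * ((∑ i, Apgf i j z * F i z)
          + (Bpgf z - 1) * ∑ i, Apgf i j z * F i 0) := by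
    have hs : Summable (fun n => rc ^ n * (z * g n j z)) :=
      ((hsum j z hz).mul_left z).congr fun n => by ring
    calc z * F j z = ∑' n, rc ^ n * (z * g n j z) := by
          rw [hFz, ← tsum_mul_left]
          exact tsum_congr fun n => by ring
      _ = rc ^ 0 * (z * g 0 j z) + ∑' n, rc ^ (n+1) * (z * g (n+1) j z) :=
          Summable.tsum_eq_zero_add hs
      _ = z * g 0 j z + ∑' n, rc * ((∑ i, (rc ^ n * g n i z) * Apgf i j z)
            + (Bpgf z - 1) * ∑ i, Apgf i j z * (rc ^ n * g n i 0)) := by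
          rw [pow_zero, one_mul]
          congr 1
          refine tsum_congr fun n => ?_
          have e1 : ∑ i, (rc ^ n * g n i z) * Apgf i j z
              = rc ^ n * ∑ i, g n i z * Apgf i j z := by
            rw [Finset.mul_sum]; exact Finset.sum_congr rfl fun i _ => by ring
          have e2 : ∑ i, Apgf i j z * (rc ^ n * g n i 0)
              = rc ^ n * ∑ i, Apgf i j z * g n i 0 := by
            rw [Finset.mul_sum]; exact Finset.sum_congr rfl fun i _ => by ring
          rw [e1, e2, hrec (n+1) (Nat.le_add_left 1 n) j z hz hz0]
          simp only [Nat.add_sub_cancel]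
          ring
      _ = z * g 0 j z + rc * ((∑ i, Apgf i j z * F i z)
            + (Bpgf z - 1) * ∑ i, Apgf i j z * F i 0) := by
          rw [tsum_mul_left, Summable.tsum_add hsA (hsB.mul_left _), tsum_mul_left, hA, hB]
  rw [hinit j z hz] at key
  have : z * (z ^ x₀ * ((pJ j : ℝ) : ℂ)) = z ^ (x₀ + 1) * ((pJ j : ℝ) : ℂ) := by ring
  rw [this] at key
  rw [key]; ring
end
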